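/- arXiv:0704.3843 — 4 statements merged into one kernel-verified Lean document; each statement's English description precedes it below -/
import Mathlib

section
/- A finite multigraph G on n vertices with m edges decomposes into k edge-disjoint maps if and only if m = kn and G is (k,0)-sparse, i.e., every subset V' of vertices spans at most k|V'| edges. -/
open scoped Classical

noncomputable section

/- We model a finite multigraph as a vertex type `V`, an edge (index) type `E`,
and an endpoint map `ends : E → Sym2 V`; loops are edges whose endpoints form a
diagonal unordered pair.  A (sub)graph is given by a `Finset` of edge indices. -/

variable {V E : Type*}

/-- The edges of `F` all of whose endpoints lie in `S`. -/
def spanned (ends : E → Sym2 V) (F : Finset E) (S : Finset V) : Finset E :=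
  F.filter (fun e => ∀ v ∈ ends e, v ∈ S)

/-- `(k,l)`-sparsity: every nonempty vertex subset `S` spans at most `k|S| - l` edges. -/
def Sparse (ends : E → Sym2 V) (F : Finset E) (k l : ℕ) : Prop :=
  ∀ S : Finset V, S.Nonempty → (spanned ends F S).card + l ≤ k * S.card

/-- The edge set `P` is a map (spanning the whole vertex set): it admits an
orientation (choice of a tail vertex among the endpoints of each edge) with
out-degree exactly `1` at every vertex. -/
def IsMapOn (ends : E → Sym2 V) (P : Finset E) : Prop :=
  ∃ tail : E → V, (∀ e ∈ P, tail e ∈ ends e) ∧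
    ∀ v : V, (P.filter (fun e => tail e = v)).card = 1

/-- The edge set `F` decomposes into `k` edge-disjoint maps. -/
def IsKMap (ends : E → Sym2 V) (F : Finset E) (k : ℕ) : Prop :=
  ∃ col : E → Fin k, ∀ i : Fin k, IsMapOn ends (F.filter (fun e => col e = i))

/-- Underlying simple graph of the edge set `F` (loops and multiplicities dropped). -/
def underGraph (ends : E → Sym2 V) (F : Finset E) : SimpleGraph V :=
  SimpleGraph.fromRel (fun u w => ∃ e ∈ F, ends e = s(u, w))

/-- `P` is a spanning pseudoforest: within each connected component, the number
of edges is at most the number of vertices (i.e. at most one cycle per component). -/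
def IsPseudoforest [Fintype V] (ends : E → Sym2 V) (P : Finset E) : Prop :=
  ∀ v : V,
    (P.filter (fun e => ∀ u ∈ ends e,
        (underGraph ends P).connectedComponentMk u =
          (underGraph ends P).connectedComponentMk v)).card ≤
      (Finset.univ.filter (fun u : V =>
        (underGraph ends P).connectedComponentMk u =
          (underGraph ends P).connectedComponentMk v)).card

/-- `P` is a spanning tree: connected underlying graph with `n - 1` edges
(counted with multiplicity). -/
def IsSpanningTree [Fintype V] (ends : E → Sym2 V) (P : Finset E) : Prop :=
  (underGraph ends P).Connected ∧ P.card + 1 = Fintype.card V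

/-- Edge type of `K_n^{k,2k}`: `2k` parallel edges between each pair of distinct
vertices and `k` loops at each vertex. -/
abbrev KEdge (V : Type*) (k : ℕ) := {p : Sym2 V × Fin (2 * k) // p.1.IsDiag → (p.2 : ℕ) < k}

/-- Endpoints of an edge of `K_n^{k,2k}`. -/
def kends {V : Type*} {k : ℕ} : KEdge V k → Sym2 V := fun p => p.1.1

/-
Each part of a decomposition is a map, whose orientation is injective on edges, so a part has
exactly `n` edges and spans at most `|S|` edges inside any vertex set `S`; summing over the `k`
parts gives `m = kn` and `(k,0)`-sparsity. Conversely, sparsity is exactly Hall's condition for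
matching every edge to one of `k` copies of one of its endpoints; since `m = kn`, such a matching
is a bijection `E ≃ V × Fin k`, and its two coordinates are an orientation and a colouring of the
edges into `k` maps.
-/

section

variable (ends : E → Sym2 V)

lemma injOn_of_card_fiber_le_one {P : Finset E} {tail : E → V}
    (hfiber : ∀ v : V, (P.filter (fun e => tail e = v)).card ≤ 1) :
    Set.InjOn tail P := by
  intro e₁ he₁ e₂ he₂ htail
  exact Finset.card_le_one.mp (hfiber _) e₁ (Finset.mem_filter.mpr ⟨he₁, rfl⟩) e₂
    (Finset.mem_filter.mpr ⟨he₂, htail.symm⟩)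

lemma IsMapOn.card_eq [Fintype V] {P : Finset E} (hP : IsMapOn ends P) :
    P.card = Fintype.card V := by
  obtain ⟨tail, -, hfiber⟩ := hP
  rw [Finset.card_eq_sum_card_fiberwise (fun e _ => Finset.mem_univ (tail e))]
  simp [hfiber]

lemma IsMapOn.card_spanned_le {P : Finset E} (hP : IsMapOn ends P) (S : Finset V) :
    (spanned ends P S).card ≤ S.card := by
  obtain ⟨tail, htail, hfiber⟩ := hP
  refine Finset.card_le_card_of_injOn tail (fun e he => ?_)
    ((injOn_of_card_fiber_le_one fun v => (hfiber v).le).mono (Finset.filter_subset _ _))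
  simp only [spanned, Finset.coe_filter, Set.mem_ofPred_eq] at he
  exact he.2 _ (htail e he.1)

lemma IsKMap.card_eq [Fintype V] {F : Finset E} {k : ℕ} (hF : IsKMap ends F k) :
    F.card = k * Fintype.card V := by
  obtain ⟨col, hcol⟩ := hF
  rw [Finset.card_eq_sum_card_fiberwise (fun e _ => Finset.mem_univ (col e))]
  simp [fun i => (hcol i).card_eq]

lemma IsKMap.sparse {F : Finset E} {k : ℕ} (hF : IsKMap ends F k) : Sparse ends F k 0 := by
  obtain ⟨col, hcol⟩ := hF
  intro S _
  have hparts : ∀ i : Fin k, (spanned ends F S).filter (fun e => col e = i) =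
      spanned ends (F.filter (fun e => col e = i)) S := fun i => Finset.filter_comm _ _ _
  calc (spanned ends F S).card + 0
      = ∑ i : Fin k, ((spanned ends F S).filter (fun e => col e = i)).card :=
        Finset.card_eq_sum_card_fiberwise (fun e _ => Finset.mem_univ (col e))
    _ ≤ ∑ _i : Fin k, S.card :=
        Finset.sum_le_sum fun i _ => hparts i ▸ (hcol i).card_spanned_le ends S
    _ = k * S.card := by simp

def incidentVerts [Fintype V] (s : Finset E) : Finset V :=
  Finset.univ.filter (fun v => ∃ e ∈ s, v ∈ ends e)

lemma incidentVerts_nonempty [Fintype V] {s : Finset E} (hs : s.Nonempty) :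
    (incidentVerts ends s).Nonempty := by
  obtain ⟨e, he⟩ := hs
  exact ⟨(ends e).out.1, by simpa [incidentVerts] using ⟨e, he, Sym2.out_fst_mem _⟩⟩

lemma subset_spanned_incidentVerts [Fintype V] {F s : Finset E} (hsF : s ⊆ F) :
    s ⊆ spanned ends F (incidentVerts ends s) := by
  intro e he
  simpa [spanned, incidentVerts, hsF he] using fun v hv => ⟨e, he, hv⟩

lemma Sparse.exists_injective_incidence [Fintype V] [Fintype E] {k : ℕ}
    (hsparse : Sparse ends Finset.univ k 0) :
    ∃ f : E → V × Fin k, Function.Injective f ∧ ∀ e, (f e).1 ∈ ends e := by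
  let slots : E → Finset (V × Fin k) := fun e => Finset.univ.filter (fun p => p.1 ∈ ends e)
  suffices hall : ∀ s : Finset E, s.card ≤ (s.biUnion slots).card by
    simpa [slots] using (Finset.all_card_le_biUnion_card_iff_exists_injective slots).mp hall
  intro s
  rcases s.eq_empty_or_nonempty with rfl | hs
  · simp
  have hslots : s.biUnion slots = incidentVerts ends s ×ˢ Finset.univ := by
    ext p
    simp [slots, incidentVerts]
  calc s.card ≤ (spanned ends Finset.univ (incidentVerts ends s)).card :=
        Finset.card_le_card (subset_spanned_incidentVerts ends (Finset.subset_univ s))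
    _ ≤ k * (incidentVerts ends s).card := by
        simpa using hsparse _ (incidentVerts_nonempty ends hs)
    _ = (s.biUnion slots).card := by rw [hslots, Finset.card_product]; simp [mul_comm]

lemma isKMap_univ_of_equiv [Fintype E] {k : ℕ} (f : E ≃ V × Fin k)
    (hf : ∀ e, (f e).1 ∈ ends e) :
    IsKMap ends Finset.univ k := by
  refine ⟨fun e => (f e).2, fun i => ⟨fun e => (f e).1, fun e _ => hf e, fun v => ?_⟩⟩
  rw [Finset.card_eq_one]
  refine ⟨f.symm (v, i), ?_⟩
  ext e
  simp [Equiv.eq_symm_apply, Prod.ext_iff, and_comm]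

end

/-- `G` decomposes into `k` edge-disjoint maps iff `m = kn` and `G` is `(k,0)`-sparse. -/
theorem stmt1 [Fintype V] [Fintype E] (k : ℕ) (ends : E → Sym2 V) :
    IsKMap ends (Finset.univ : Finset E) k ↔
      (Fintype.card E = k * Fintype.card V ∧ Sparse ends Finset.univ k 0) := by
  refine ⟨fun hmap => ⟨hmap.card_eq ends, hmap.sparse ends⟩, fun ⟨hcard, hsparse⟩ => ?_⟩
  obtain ⟨f, hinj, hinc⟩ := hsparse.exists_injective_incidence ends (k := k)
  have hbij : Function.Bijective f :=
    (Fintype.bijective_iff_injective_and_card f).mpr ⟨hinj, by simp [hcard, mul_comm]⟩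
  exact isKMap_univ_of_equiv ends (Equiv.ofBijective f hbij) hinc
end
end

section
/- Let 0 ≤ ℓ ≤ k and let G be a finite multigraph on n vertices with exactly kn - ℓ edges. Then G is (k,ℓ)-sparse if and only if G decomposes into ℓ edge-disjoint spanning trees and k - ℓ edge-disjoint maps. -/
open scoped Classical

noncomputable section

/- We model a finite multigraph as a vertex type `V`, an edge (index) type `E`,
and an endpoint map `ends : E → Sym2 V`; loops are edges whose endpoints form a
diagonal unordered pair.  A (sub)graph is given by a `Finset` of edge indices. -/

variable {V E : Type*}

/-!
By the matroid partition theorem of Nash-Williams and Edmonds, the edge set splits into `ℓ` sets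
independent in the forest matroid (the `(1,1)`-sparse edge sets) and `k - ℓ` sets independent in
the pseudoforest matroid (the `(1,0)`-sparse edge sets) as soon as every edge set `F` satisfies
`|F| ≤ ℓ r₁(F) + (k - ℓ) r₀(F)`. Splitting `F` into its connected components, this rank condition
follows from `(k,ℓ)`-sparsity, since a component with `m` vertices carries a spanning tree
(`r₁ = m - 1`) and, unless it is itself a tree, a spanning tree plus one edge (`r₀ = m`).
As `|E| = kn - ℓ`, every forest part then has `n - 1` edges and every pseudoforest part `n`:
a `(1,1)`-sparse set with `n - 1` edges is connected, and a `(1,0)`-sparse set with `n` edges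
is a map by Hall's theorem. Conversely, trees are `(1,1)`-sparse and maps `(1,0)`-sparse, and
sparsity adds up over a decomposition.
-/

open Finset

/-! ### Finite matroids and the partition theorem -/

/-- Matroids given by their independent finsets (the axioms of `IndepMatroid.ofFinset`), so as
to work with an `ℕ`-valued rank function. -/
structure FinMatroid (α : Type*) where
  Indep : Finset α → Prop
  indep_empty : Indep ∅
  indep_subset : ∀ ⦃I J⦄, Indep J → I ⊆ J → Indep I
  indep_aug : ∀ ⦃I J⦄, Indep I → Indep J → #I < #J → ∃ e ∈ J, e ∉ I ∧ Indep (insert e I)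

namespace FinMatroid

variable {α : Type*} (M : FinMatroid α)

def rk (F : Finset α) : ℕ := ({I ∈ F.powerset | M.Indep I}).sup card

variable {M}

lemma Indep.card_le_rk {I F : Finset α} (hI : M.Indep I) (hIF : I ⊆ F) : #I ≤ M.rk F :=
  le_sup (f := card) (mem_filter.2 ⟨mem_powerset.2 hIF, hI⟩)

variable (M)

lemma exists_basis (F : Finset α) : ∃ B ⊆ F, M.Indep B ∧ #B = M.rk F := by
  obtain ⟨B, hB, hBrk⟩ := exists_mem_eq_sup _
    ⟨∅, mem_filter.2 ⟨empty_mem_powerset F, M.indep_empty⟩⟩ card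
  rw [mem_filter, mem_powerset] at hB
  exact ⟨B, hB.1, hB.2, hBrk.symm⟩

lemma rk_mono {F F' : Finset α} (h : F ⊆ F') : M.rk F ≤ M.rk F' := by
  obtain ⟨B, hBF, hB, hBrk⟩ := M.exists_basis F
  exact hBrk ▸ hB.card_le_rk (hBF.trans h)

@[simp] lemma rk_empty : M.rk ∅ = 0 := by
  simp [rk]

lemma rk_singleton_of_not_indep {e : α} (he : ¬ M.Indep {e}) : M.rk {e} = 0 := by
  obtain ⟨B, hB, hBi, hBrk⟩ := M.exists_basis {e}
  rcases subset_singleton_iff.1 hB with rfl | rfl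
  · simpa using hBrk.symm
  · exact absurd hBi he

lemma not_indep_insert_of_card_eq_rk {B F : Finset α} (hBF : B ⊆ F) (hB : #B = M.rk F)
    {e : α} (he : e ∈ F) (heB : e ∉ B) : ¬ M.Indep (insert e B) := fun h => by
  have := h.card_le_rk (insert_subset he hBF)
  rw [card_insert_of_notMem heB] at this
  omega

variable {M}

lemma Indep.exists_basis_superset {I F : Finset α} (hI : M.Indep I) (hIF : I ⊆ F) :
    ∃ B, I ⊆ B ∧ B ⊆ F ∧ M.Indep B ∧ #B = M.rk F := by
  by_cases h : #I = M.rk F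
  · exact ⟨I, subset_rfl, hIF, hI, h⟩
  have hIrk := hI.card_le_rk hIF
  obtain ⟨B, hBF, hB, hBrk⟩ := M.exists_basis F
  obtain ⟨e, heB, heI, hIe⟩ := M.indep_aug hI hB (by omega)
  have : M.rk F - #(insert e I) < M.rk F - #I := by
    rw [card_insert_of_notMem heI]
    omega
  obtain ⟨B', hIB', hB'F, hB', hB'rk⟩ := hIe.exists_basis_superset (insert_subset (hBF heB) hIF)
  exact ⟨B', (subset_insert e I).trans hIB', hB'F, hB', hB'rk⟩
termination_by M.rk F - #I

variable (M)

lemma rk_union_add_rk_inter_le (A B : Finset α) :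
    M.rk (A ∪ B) + M.rk (A ∩ B) ≤ M.rk A + M.rk B := by
  obtain ⟨I, hI, hIi, hIrk⟩ := M.exists_basis (A ∩ B)
  obtain ⟨J, hIJ, hJ, hJi, hJrk⟩ := hIi.exists_basis_superset (hI.trans inter_subset_union)
  have hA : #(J ∩ A) ≤ M.rk A :=
    (M.indep_subset hJi inter_subset_left).card_le_rk inter_subset_right
  have hB : #(J ∩ B) ≤ M.rk B :=
    (M.indep_subset hJi inter_subset_left).card_le_rk inter_subset_right
  have hJAB : J ∩ A ∪ J ∩ B = J := by rw [← inter_union_distrib_left, inter_eq_left.2 hJ]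
  have hIAB : I ⊆ J ∩ A ∩ (J ∩ B) := fun x hx => by
    have := hI hx
    simp only [mem_inter] at this ⊢
    exact ⟨⟨hIJ hx, this.1⟩, hIJ hx, this.2⟩
  have := card_union_add_card_inter (J ∩ A) (J ∩ B)
  rw [hJAB] at this
  have := card_le_card hIAB
  omega

lemma rk_insert_eq_of_subset {e : α} {A B : Finset α} (hAB : A ⊆ B) (heB : e ∉ B)
    (h : M.rk (insert e A) = M.rk A) : M.rk (insert e B) = M.rk B := by
  have hsub := M.rk_union_add_rk_inter_le B (insert e A)
  rw [show B ∪ insert e A = insert e B by grind, show B ∩ insert e A = A by grind, h] at hsub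
  have := M.rk_mono (subset_insert e B)
  omega

def contract (e : α) (he : M.Indep {e}) : FinMatroid α where
  Indep I := e ∉ I ∧ M.Indep (insert e I)
  indep_empty := ⟨notMem_empty e, by simpa using he⟩
  indep_subset I J hJ hIJ :=
    ⟨fun h => hJ.1 (hIJ h), M.indep_subset hJ.2 (insert_subset_insert e hIJ)⟩
  indep_aug I J hI hJ hIJ := by
    obtain ⟨x, hxJ, hxI, hx⟩ := M.indep_aug hI.2 hJ.2
      (by rw [card_insert_of_notMem hI.1, card_insert_of_notMem hJ.1]; omega)
    have hxe : x ≠ e := by rintro rfl; exact hxI (mem_insert_self x I)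
    refine ⟨x, (mem_insert.1 hxJ).resolve_left hxe, fun h => hxI (mem_insert_of_mem h), ?_, ?_⟩
    · simpa [hxe.symm] using hI.1
    · rwa [insert_comm]

lemma rk_contract_add_one {e : α} (he : M.Indep {e}) (F : Finset α) :
    (M.contract e he).rk F + 1 = M.rk (insert e F) := by
  apply le_antisymm
  · obtain ⟨B, hBF, ⟨heB, hB⟩, hBrk⟩ := (M.contract e he).exists_basis F
    rw [← hBrk, ← card_insert_of_notMem heB]
    exact hB.card_le_rk (insert_subset_insert e hBF)
  · obtain ⟨B, heB, hBF, hB, hBrk⟩ :=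
      he.exists_basis_superset (singleton_subset_iff.2 (mem_insert_self e F))
    have heB : e ∈ B := singleton_subset_iff.1 heB
    have hBe : (M.contract e he).Indep (B.erase e) := ⟨notMem_erase e B, by rwa [insert_erase heB]⟩
    have := hBe.card_le_rk (F := F) fun x hx =>
      (mem_insert.1 (hBF (mem_of_mem_erase hx))).resolve_left (ne_of_mem_erase hx)
    rw [card_erase_of_mem heB] at this
    have := card_pos.2 ⟨e, heB⟩
    omega

section Partition

variable {ι : Type*} [Fintype ι] (Ms : ι → FinMatroid α)

lemma sum_rk_union_le_card {A B : Finset α} (hAB : #(A ∩ B) ≤ ∑ i, (Ms i).rk (A ∩ B))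
    (hA : ∑ i, (Ms i).rk A ≤ #A) (hB : ∑ i, (Ms i).rk B ≤ #B) :
    ∑ i, (Ms i).rk (A ∪ B) ≤ #(A ∪ B) := by
  have hsub : ∑ i, (Ms i).rk (A ∪ B) + ∑ i, (Ms i).rk (A ∩ B) ≤
      ∑ i, (Ms i).rk A + ∑ i, (Ms i).rk B := by
    simp only [← sum_add_distrib]
    exact sum_le_sum fun i _ => (Ms i).rk_union_add_rk_inter_le A B
  have := card_union_add_card_inter A B
  omega

variable [DecidableEq ι]

lemma sum_rk_update_contract {i : ι} {e : α} (he : (Ms i).Indep {e}) (F : Finset α) :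
    ∑ j, (Function.update Ms i ((Ms i).contract e he) j).rk F + (Ms i).rk F + 1 =
      ∑ j, (Ms j).rk F + (Ms i).rk (insert e F) := by
  simp only [Function.apply_update (fun _ M => FinMatroid.rk M F), sum_update_of_mem (mem_univ i),
    ← (Ms i).rk_contract_add_one he F, ← add_sum_erase _ _ (mem_univ i), sdiff_singleton_eq_erase]
  ring

/-- If no such `i` existed, every `Ms i` would span `e` by a tight subset of `X.erase e`; the
union `U` of these tight sets is tight and spans `e` in every `Ms i`, so `insert e U` would
violate the rank condition. -/
lemma exists_contract_forall_card_le {X : Finset α} (hX : ∀ F ⊆ X, #F ≤ ∑ i, (Ms i).rk F)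
    {e : α} (he : e ∈ X) :
    ∃ i, ∃ hi : (Ms i).Indep {e}, ∀ F ⊆ X.erase e,
      #F ≤ ∑ j, (Function.update Ms i ((Ms i).contract e hi) j).rk F := by
  by_contra! hcon
  have hspan : ∀ i, ∃ F ⊆ X.erase e,
      ∑ j, (Ms j).rk F ≤ #F ∧ (Ms i).rk (insert e F) = (Ms i).rk F := by
    intro i
    by_cases hi : (Ms i).Indep {e}
    · obtain ⟨F, hF, hlt⟩ := hcon i hi
      have := sum_rk_update_contract Ms hi F
      have := hX F (hF.trans (erase_subset e X))
      have := (Ms i).rk_mono (subset_insert e F)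
      exact ⟨F, hF, by omega, by omega⟩
    · exact ⟨∅, empty_subset _, by simp, by simp [(Ms i).rk_singleton_of_not_indep hi]⟩
  choose T hTX hTtight hTspan using hspan
  have hU : univ.sup T ⊆ X.erase e ∧ ∑ j, (Ms j).rk (univ.sup T) ≤ #(univ.sup T) :=
    sup_induction (p := fun U => U ⊆ X.erase e ∧ ∑ j, (Ms j).rk U ≤ #U) (by simp)
      (fun A hA B hB => ⟨union_subset hA.1 hB.1, sum_rk_union_le_card Ms
        (hX _ (inter_subset_left.trans (hA.1.trans (erase_subset e X)))) hA.2 hB.2⟩)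
      (fun i _ => ⟨hTX i, hTtight i⟩)
  have heU : e ∉ univ.sup T := fun h => notMem_erase e X (hU.1 h)
  have hins : ∀ i, (Ms i).rk (insert e (univ.sup T)) = (Ms i).rk (univ.sup T) := fun i =>
    (Ms i).rk_insert_eq_of_subset (le_sup (mem_univ i)) heU (hTspan i)
  have := hX _ (insert_subset he (hU.1.trans (erase_subset e X)))
  rw [card_insert_of_notMem heU, sum_congr rfl fun i _ => hins i] at this
  omega

/-- The matroid partition theorem of Nash-Williams and Edmonds. -/
theorem exists_indep_partition [Nonempty ι] (X : Finset α)
    (hX : ∀ F ⊆ X, #F ≤ ∑ i, (Ms i).rk F) :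
    ∃ col : α → ι, ∀ i, (Ms i).Indep {x ∈ X | col x = i} := by
  induction X using Finset.strongInduction generalizing Ms with
  | _ X ih =>
  rcases X.eq_empty_or_nonempty with rfl | ⟨e, he⟩
  · exact ⟨fun _ => Classical.arbitrary ι, fun i => by simpa using (Ms i).indep_empty⟩
  obtain ⟨i₀, hi₀, hrest⟩ := exists_contract_forall_card_le Ms hX he
  obtain ⟨col, hcol⟩ := ih _ (erase_ssubset he) _ hrest
  refine ⟨Function.update col e i₀, fun i => ?_⟩
  have hsub : {x ∈ X | Function.update col e i₀ x = i} ⊆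
      insert e {x ∈ X.erase e | col x = i} := by
    intro x
    by_cases hx : x = e <;> simp [hx, Function.update_of_ne]
  have hi := hcol i
  by_cases hii₀ : i = i₀
  · subst hii₀
    rw [Function.update_self] at hi
    exact (Ms i).indep_subset hi.2 hsub
  · rw [Function.update_of_ne hii₀] at hi
    refine (Ms i).indep_subset hi ((subset_insert_iff_of_notMem ?_).1 hsub)
    simp [Ne.symm hii₀]

end Partition

end FinMatroid

lemma Finset.exists_subset_injOn_image_eq {α β : Type*} (f : α → β) (s : Finset α) :
    ∃ t ⊆ s, Set.InjOn f t ∧ t.image f = s.image f := by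
  obtain ⟨u, hus, hinj, himg⟩ := Set.SurjOn.exists_subset_injOn_image_eq (f := f)
    (s := (s : Set α)) (t := f '' s) (Set.surjOn_image f s)
  lift u to Finset α using s.finite_toSet.subset hus
  exact ⟨u, by simpa using hus, hinj, by simpa [← Finset.coe_inj] using himg⟩

lemma SimpleGraph.connectedComponentMk_surjective (G : SimpleGraph V) :
    Function.Surjective G.connectedComponentMk :=
  fun c => c.ind fun v => ⟨v, rfl⟩

lemma SimpleGraph.Reachable.apply_eq_of_adj {G : SimpleGraph V} {β : Sort*} {f : V → β}
    (hf : ∀ ⦃u v⦄, G.Adj u v → f u = f v) {u v : V} (h : G.Reachable u v) : f u = f v := by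
  obtain ⟨p⟩ := h
  induction p with
  | nil => rfl
  | cons hadj _ ih => exact (hf hadj).trans ih

/-! ### Sparse edge sets of a multigraph -/

section Multigraph

variable {ends : E → Sym2 V}

variable (ends) in
def someEnd (e : E) : V := (ends e).out.1

lemma someEnd_mem (e : E) : someEnd ends e ∈ ends e := Sym2.out_fst_mem _

@[simp] lemma mem_spanned {F : Finset E} {S : Finset V} {e : E} :
    e ∈ spanned ends F S ↔ e ∈ F ∧ ∀ v ∈ ends e, v ∈ S := mem_filter

variable (ends) in
lemma spanned_subset (F : Finset E) (S : Finset V) : spanned ends F S ⊆ F := filter_subset _ _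

variable (ends) in
lemma spanned_mono {F F' : Finset E} (h : F ⊆ F') (S : Finset V) :
    spanned ends F S ⊆ spanned ends F' S := filter_subset_filter _ h

variable (ends) in
lemma spanned_mono_right (F : Finset E) {S S' : Finset V} (h : S ⊆ S') :
    spanned ends F S ⊆ spanned ends F S' :=
  fun _ he => mem_spanned.2 ⟨(mem_spanned.1 he).1, fun v hv => h ((mem_spanned.1 he).2 v hv)⟩

@[simp] lemma spanned_empty (F : Finset E) : spanned ends F (∅ : Finset V) = ∅ :=
  filter_false_of_mem fun e _ h => notMem_empty _ (h _ (someEnd_mem e))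

variable (ends) in
lemma spanned_insert_subset (e : E) (F : Finset E) (S : Finset V) :
    spanned ends (insert e F) S ⊆ insert e (spanned ends F S) := fun x hx => by
  simp only [mem_spanned, mem_insert] at hx ⊢
  tauto

lemma Sparse.mono {F F' : Finset E} {k l : ℕ} (h : Sparse ends F' k l) (hF : F ⊆ F') :
    Sparse ends F k l := fun S hS =>
  (Nat.add_le_add_right (card_le_card (spanned_mono ends hF S)) l).trans (h S hS)

lemma sparse_empty {k l : ℕ} (hl : l ≤ k) : Sparse ends ∅ k l := fun S hS => by
  simpa [spanned] using hl.trans (Nat.le_mul_of_pos_right k hS.card_pos)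

lemma Sparse.card_spanned_le {F : Finset E} (h : Sparse ends F 1 0) (S : Finset V) :
    #(spanned ends F S) ≤ #S := by
  rcases S.eq_empty_or_nonempty with rfl | hS
  · simp
  · simpa using h S hS

lemma Sparse.card_add_le [Fintype V] [Nonempty V] {F : Finset E} {k l : ℕ}
    (h : Sparse ends F k l) : #F + l ≤ k * Fintype.card V := by
  simpa [spanned] using h univ univ_nonempty

lemma underGraph_adj {F : Finset E} {u w : V} :
    (underGraph ends F).Adj u w ↔ u ≠ w ∧ ∃ e ∈ F, ends e = s(u, w) := by
  rw [underGraph, SimpleGraph.fromRel_adj]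
  refine and_congr_right fun _ => ⟨?_, Or.inl⟩
  rintro (h | ⟨e, he, hew⟩)
  · exact h
  · exact ⟨e, he, hew.trans Sym2.eq_swap⟩

variable (ends) in
lemma underGraph_mono {F F' : Finset E} (h : F ⊆ F') : underGraph ends F ≤ underGraph ends F' :=
  fun _ _ hadj => by
    obtain ⟨hne, e, he, hew⟩ := underGraph_adj.1 hadj
    exact underGraph_adj.2 ⟨hne, e, h he, hew⟩

lemma reachable_of_mem {F : Finset E} {e : E} (he : e ∈ F) {u w : V} (hu : u ∈ ends e)
    (hw : w ∈ ends e) : (underGraph ends F).Reachable u w := by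
  rcases eq_or_ne u w with rfl | huw
  · rfl
  · exact (underGraph_adj.2 ⟨huw, e, he, (Sym2.mem_and_mem_iff huw).1 ⟨hu, hw⟩⟩).reachable

lemma connectedComponentMk_eq_of_mem {F : Finset E} {e : E} (he : e ∈ F) {u : V}
    (hu : u ∈ ends e) : (underGraph ends F).connectedComponentMk u =
      (underGraph ends F).connectedComponentMk (someEnd ends e) :=
  SimpleGraph.ConnectedComponent.sound (reachable_of_mem he hu (someEnd_mem e))

/-- Each class of `f` meeting `S` spans fewer edges of `J` than it has vertices. -/
lemma Sparse.card_add_card_image_le {J : Finset E} (hJ : Sparse ends J 1 1) {β : Type*}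
    (f : V → β) {S : Finset V}
    (hJS : ∀ e ∈ J, ∀ u ∈ ends e, u ∈ S ∧ f u = f (someEnd ends e)) :
    #J + #(S.image f) ≤ #S := by
  have hJ' : #J = ∑ b ∈ S.image f, #{e ∈ J | f (someEnd ends e) = b} :=
    card_eq_sum_card_fiberwise fun e he => mem_image_of_mem f (hJS e he _ (someEnd_mem e)).1
  have hS : #S = ∑ b ∈ S.image f, #{v ∈ S | f v = b} :=
    card_eq_sum_card_fiberwise fun v hv => mem_image_of_mem f hv
  rw [hJ', hS, card_eq_sum_ones (S.image f), ← sum_add_distrib]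
  refine sum_le_sum fun b hb => ?_
  obtain ⟨v, hv, rfl⟩ := mem_image.1 hb
  have hsub : {e ∈ J | f (someEnd ends e) = f v} ⊆ spanned ends J {w ∈ S | f w = f v} :=
    fun e he => by
      rw [mem_filter] at he
      exact mem_spanned.2 ⟨he.1, fun u hu =>
        mem_filter.2 ⟨(hJS e he.1 u hu).1, (hJS e he.1 u hu).2.trans he.2⟩⟩
  have := hJ {w ∈ S | f w = f v} ⟨v, mem_filter.2 ⟨hv, rfl⟩⟩
  have := card_le_card hsub
  omega

lemma Sparse.reachable_of_card_le {F : Finset E} (hF : Sparse ends F 1 1) {S : Finset V}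
    (hFS : ∀ e ∈ F, ∀ u ∈ ends e, u ∈ S) (hS : #S ≤ #F + 1) {u w : V} (hu : u ∈ S)
    (hw : w ∈ S) : (underGraph ends F).Reachable u w := by
  have := hF.card_add_card_image_le (underGraph ends F).connectedComponentMk
    fun e he u hu => ⟨hFS e he u hu, connectedComponentMk_eq_of_mem he hu⟩
  exact SimpleGraph.ConnectedComponent.exact
    (card_le_one.1 (by omega) _ (mem_image_of_mem _ hu) _ (mem_image_of_mem _ hw))

lemma Sparse.exists_tight_of_not_sparse_insert {I : Finset E} {m : ℕ} (hI : Sparse ends I 1 m)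
    {e : E} (h : ¬ Sparse ends (insert e I) 1 m) :
    ∃ S : Finset V, S.Nonempty ∧ (∀ u ∈ ends e, u ∈ S) ∧ #(spanned ends I S) + m = #S := by
  simp only [Sparse, not_forall, not_le] at h
  obtain ⟨S, hS, hlt⟩ := h
  have := card_le_card (spanned_insert_subset ends e I S)
  have := card_insert_le e (spanned ends I S)
  have := hI S hS
  refine ⟨S, hS, fun u hu => ?_, by omega⟩
  by_contra huS
  have : spanned ends (insert e I) S ⊆ spanned ends I S := fun x hx => by
    obtain ⟨hxI, hxS⟩ := mem_spanned.1 hx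
    rcases mem_insert.1 hxI with rfl | hxI
    · exact absurd (hxS u hu) huS
    · exact mem_spanned.2 ⟨hxI, hxS⟩
  have := card_le_card this
  omega

lemma Sparse.reachable_of_not_sparse_insert {I : Finset E} (hI : Sparse ends I 1 1) {e : E}
    (h : ¬ Sparse ends (insert e I) 1 1) {u w : V} (hu : u ∈ ends e) (hw : w ∈ ends e) :
    (underGraph ends I).Reachable u w := by
  obtain ⟨S, -, heS, hS⟩ := hI.exists_tight_of_not_sparse_insert h
  refine SimpleGraph.Reachable.mono (underGraph_mono ends (spanned_subset ends I S)) ?_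
  exact (hI.mono (spanned_subset ends I S)).reachable_of_card_le
    (fun x hx => (mem_spanned.1 hx).2) (by omega) (heS u hu) (heS w hw)

lemma Sparse.card_spanned_union_eq {I : Finset E} (hI : Sparse ends I 1 0) {A B : Finset V}
    (hA : #(spanned ends I A) = #A) (hB : #(spanned ends I B) = #B) :
    #(spanned ends I (A ∪ B)) = #(A ∪ B) := by
  have hunion : spanned ends I A ∪ spanned ends I B ⊆ spanned ends I (A ∪ B) :=
    union_subset (spanned_mono_right ends I subset_union_left)
      (spanned_mono_right ends I subset_union_right)
  have hinter : spanned ends I A ∩ spanned ends I B ⊆ spanned ends I (A ∩ B) := fun e he => by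
    simp only [mem_inter, mem_spanned] at he ⊢
    exact ⟨he.1.1, fun v hv => ⟨he.1.2 v hv, he.2.2 v hv⟩⟩
  have := card_union_add_card_inter (spanned ends I A) (spanned ends I B)
  have := card_union_add_card_inter A B
  have := card_le_card hunion
  have := card_le_card hinter
  have := hI.card_spanned_le (A ∪ B)
  have := hI.card_spanned_le (A ∩ B)
  omega

/-- If no edge of `J \ I` can be added to `I`, the union `U` of the tight sets blocking them is
tight for `I`, and every edge of `J` not spanned by `U` lies in `I`. -/
lemma Sparse.exists_insert_sparse_one_zero {I J : Finset E} (hI : Sparse ends I 1 0)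
    (hJ : Sparse ends J 1 0) (hIJ : #I < #J) :
    ∃ e ∈ J, e ∉ I ∧ Sparse ends (insert e I) 1 0 := by
  by_contra! h
  have hblock : ∀ e ∈ J \ I, ∃ S : Finset V, S.Nonempty ∧ (∀ u ∈ ends e, u ∈ S) ∧
      #(spanned ends I S) = #S := fun e he =>
    hI.exists_tight_of_not_sparse_insert (h e (mem_sdiff.1 he).1 (mem_sdiff.1 he).2)
  choose! T hTne hTe hT using hblock
  obtain ⟨e₀, he₀⟩ : (J \ I).Nonempty :=
    sdiff_nonempty.2 fun hJI => by have := card_le_card hJI; omega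
  set U := (J \ I).sup T
  have hU : #(spanned ends I U) = #U :=
    sup_induction (p := fun U => #(spanned ends I U) = #U) (by simp)
      (fun _ hA _ hB => hI.card_spanned_union_eq hA hB) hT
  have hsub : J \ spanned ends J U ⊆ I \ spanned ends I U := fun e he => by
    simp only [mem_sdiff, mem_spanned, not_and] at he ⊢
    have heI : e ∈ I := by
      by_contra heI
      have heJI : e ∈ J \ I := mem_sdiff.2 ⟨he.1, heI⟩
      exact he.2 he.1 fun u hu => le_sup (f := T) heJI (hTe e heJI u hu)
    exact ⟨heI, fun _ => he.2 he.1⟩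
  have := card_le_card hsub
  rw [card_sdiff_of_subset (spanned_subset ends J U),
    card_sdiff_of_subset (spanned_subset ends I U)] at this
  have := hJ U ((hTne e₀ he₀).mono (le_sup he₀))
  have := card_le_card (spanned_subset ends J U)
  have := card_le_card (spanned_subset ends I U)
  omega

variable (ends) in
def pseudoforestMatroid : FinMatroid E where
  Indep F := Sparse ends F 1 0
  indep_empty := sparse_empty zero_le_one
  indep_subset _ _ h hIJ := h.mono hIJ
  indep_aug _ _ := Sparse.exists_insert_sparse_one_zero

lemma Sparse.union_sparse_one_zero {B F X : Finset E} (hB : Sparse ends B 1 1) (hBF : B ⊆ F)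
    (hX : Set.InjOn (fun x => (underGraph ends F).connectedComponentMk (someEnd ends x)) X) :
    Sparse ends (B ∪ X) 1 0 := by
  intro S hS
  set mk := (underGraph ends F).connectedComponentMk
  have hXS : #(spanned ends X S) ≤ #(S.image mk) :=
    card_le_card_of_injOn (fun x => mk (someEnd ends x))
      (fun x hx => mem_image_of_mem _ ((mem_spanned.1 hx).2 _ (someEnd_mem x)))
      (hX.mono (spanned_subset ends X S))
  have hBS := (hB.mono (spanned_subset ends B S)).card_add_card_image_le mk fun e he u hu =>
    ⟨(mem_spanned.1 he).2 u hu, connectedComponentMk_eq_of_mem (hBF (mem_spanned.1 he).1) hu⟩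
  have hsub : spanned ends (B ∪ X) S ⊆ spanned ends B S ∪ spanned ends X S := fun e he => by
    simp only [mem_union, mem_spanned] at he ⊢
    tauto
  have := card_le_card hsub
  have := card_union_le (spanned ends B S) (spanned ends X S)
  omega

lemma IsMapOn.sparse {P : Finset E} (h : IsMapOn ends P) : Sparse ends P 1 0 := by
  obtain ⟨tail, hPtail, htail⟩ := h
  intro S _
  have hsub : spanned ends P S ⊆ S.biUnion fun v => {e ∈ P | tail e = v} := fun e he =>
    mem_biUnion.2 ⟨tail e, (mem_spanned.1 he).2 _ (hPtail e (mem_spanned.1 he).1),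
      mem_filter.2 ⟨(mem_spanned.1 he).1, rfl⟩⟩
  simpa [htail] using (card_le_card hsub).trans card_biUnion_le

lemma Sparse.of_fibers {ι : Type*} [Fintype ι] [DecidableEq ι] {F : Finset E} (col : E → ι)
    (m : ι → ℕ) (h : ∀ i, Sparse ends {e ∈ F | col e = i} 1 (m i)) :
    Sparse ends F (Fintype.card ι) (∑ i, m i) := by
  intro S hS
  have hfib : #(spanned ends F S) = ∑ i, #(spanned ends {e ∈ F | col e = i} S) := by
    rw [card_eq_sum_card_fiberwise (f := col) (t := univ) fun _ _ => mem_univ _]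
    exact sum_congr rfl fun i _ => by rw [spanned, spanned, filter_comm]
  calc #(spanned ends F S) + ∑ i, m i
      = ∑ i, (#(spanned ends {e ∈ F | col e = i} S) + m i) := by rw [hfib, sum_add_distrib]
    _ ≤ ∑ _i : ι, 1 * #S := sum_le_sum fun i _ => h i S hS
    _ = Fintype.card ι * #S := by simp

/-! ### Connected components -/

section

variable [Fintype V]

/-- Adding an edge `s(p, q)` merges at most two components: sending the component of `q` to
that of `p` is constant along the new graph. -/
lemma card_connectedComponent_le_insert (a : E) (F : Finset E) :
    Fintype.card (underGraph ends F).ConnectedComponent ≤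
      Fintype.card (underGraph ends (insert a F)).ConnectedComponent + 1 := by
  set G := underGraph ends F
  set G' := underGraph ends (insert a F)
  obtain ⟨⟨p, q⟩, hpq⟩ := Sym2.mk_surjective (ends a)
  let f (x : V) : G.ConnectedComponent :=
    if G.Reachable x q then G.connectedComponentMk p else G.connectedComponentMk x
  have hf : ∀ ⦃x y⦄, G'.Adj x y → f x = f y := by
    intro x y hxy
    obtain ⟨-, e, he, hexy⟩ := underGraph_adj.1 hxy
    rcases mem_insert.1 he with rfl | he
    · have hp : f p = G.connectedComponentMk p := by unfold f; split_ifs <;> rfl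
      have hq : f q = G.connectedComponentMk p := if_pos (SimpleGraph.Reachable.refl q)
      rcases Sym2.eq_iff.1 (hexy.symm.trans hpq.symm) with ⟨rfl, rfl⟩ | ⟨rfl, rfl⟩ <;>
        simp only [hp, hq]
    · have hr : G.Reachable x y :=
        reachable_of_mem he (hexy ▸ Sym2.mem_mk_left x y) (hexy ▸ Sym2.mem_mk_right x y)
      have : G.Reachable x q ↔ G.Reachable y q := ⟨hr.symm.trans, hr.trans⟩
      simp only [f, this, SimpleGraph.ConnectedComponent.sound hr]
  let g (c : G'.ConnectedComponent) : G.ConnectedComponent :=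
    c.lift f fun _ _ w _ => w.reachable.apply_eq_of_adj hf
  have hsub : univ.erase (G.connectedComponentMk q) ⊆ univ.image g := by
    intro c hc
    obtain ⟨x, rfl⟩ := G.connectedComponentMk_surjective c
    have hxq : ¬ G.Reachable x q := fun h =>
      ne_of_mem_erase hc (SimpleGraph.ConnectedComponent.sound h)
    exact mem_image.2 ⟨G'.connectedComponentMk x, mem_univ _, if_neg hxq⟩
  have := (card_le_card hsub).trans card_image_le
  rw [card_erase_of_mem (mem_univ _), card_univ, card_univ] at this
  omega

lemma card_le_card_add_card_connectedComponent (F : Finset E) :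
    Fintype.card V ≤ #F + Fintype.card (underGraph ends F).ConnectedComponent := by
  induction F using Finset.induction_on with
  | empty =>
    rw [card_empty, zero_add]
    refine Fintype.card_le_of_injective (underGraph ends ∅).connectedComponentMk fun u v huv => ?_
    obtain ⟨w⟩ := SimpleGraph.ConnectedComponent.exact huv
    cases w with
    | nil => rfl
    | cons h _ => simp [underGraph_adj] at h
  | insert a F ha ih =>
    have := card_connectedComponent_le_insert (ends := ends) a F
    rw [card_insert_of_notMem ha]
    omega

lemma card_connectedComponent_le_of_forall_reachable {B F : Finset E}
    (h : ∀ e ∈ F, ∀ u ∈ ends e, (underGraph ends B).Reachable u (someEnd ends e)) :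
    Fintype.card (underGraph ends B).ConnectedComponent ≤
      Fintype.card (underGraph ends F).ConnectedComponent := by
  have hf : ∀ ⦃u v⦄, (underGraph ends F).Adj u v →
      (underGraph ends B).connectedComponentMk u = (underGraph ends B).connectedComponentMk v := by
    intro u v huv
    obtain ⟨-, e, he, hew⟩ := underGraph_adj.1 huv
    exact (SimpleGraph.ConnectedComponent.sound (h e he u (hew ▸ Sym2.mem_mk_left u v))).trans
      (SimpleGraph.ConnectedComponent.sound (h e he v (hew ▸ Sym2.mem_mk_right u v))).symm
  refine Fintype.card_le_of_surjective
    (fun c => c.lift (underGraph ends B).connectedComponentMk fun _ _ w _ =>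
      w.reachable.apply_eq_of_adj hf) fun c => ?_
  obtain ⟨v, rfl⟩ := SimpleGraph.connectedComponentMk_surjective _ c
  exact ⟨(underGraph ends F).connectedComponentMk v, rfl⟩

lemma spanned_connectedComponent (F : Finset E) (c : (underGraph ends F).ConnectedComponent) :
    spanned ends F {v | (underGraph ends F).connectedComponentMk v = c} =
      {e ∈ F | (underGraph ends F).connectedComponentMk (someEnd ends e) = c} := by
  ext e
  simp only [mem_spanned, mem_filter, mem_univ, true_and, and_congr_right_iff]
  exact fun he => ⟨fun h => h _ (someEnd_mem e),
    fun h v hv => (connectedComponentMk_eq_of_mem he hv).trans h⟩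

/-! ### The forest matroid and the rank condition -/

lemma Sparse.card_le_of_forall_reachable {I J : Finset E} (hJ : Sparse ends J 1 1)
    (hJI : ∀ e ∈ J, ∀ u ∈ ends e, (underGraph ends I).Reachable u (someEnd ends e)) :
    #J ≤ #I := by
  have := hJ.card_add_card_image_le (S := univ) (underGraph ends I).connectedComponentMk
    fun e he u hu => ⟨mem_univ u, SimpleGraph.ConnectedComponent.sound (hJI e he u hu)⟩
  rw [image_univ_of_surjective (SimpleGraph.connectedComponentMk_surjective _), card_univ,
    card_univ] at this
  have := card_le_card_add_card_connectedComponent (ends := ends) I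
  omega

lemma Sparse.exists_insert_sparse_one_one {I J : Finset E} (hI : Sparse ends I 1 1)
    (hJ : Sparse ends J 1 1) (hIJ : #I < #J) :
    ∃ e ∈ J, e ∉ I ∧ Sparse ends (insert e I) 1 1 := by
  by_contra! h
  have := hJ.card_le_of_forall_reachable fun e he u hu => by
    by_cases heI : e ∈ I
    · exact reachable_of_mem heI hu (someEnd_mem e)
    · exact hI.reachable_of_not_sparse_insert (h e he heI) hu (someEnd_mem e)
  omega

variable (ends) in
def forestMatroid : FinMatroid E where
  Indep F := Sparse ends F 1 1
  indep_empty := sparse_empty le_rfl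
  indep_subset _ _ h hIJ := h.mono hIJ
  indep_aug _ _ := Sparse.exists_insert_sparse_one_one

lemma exists_maximal_forest (F : Finset E) :
    ∃ B ⊆ F, Sparse ends B 1 1 ∧ #B = (forestMatroid ends).rk F ∧
      ∀ e ∈ F, ∀ u ∈ ends e, (underGraph ends B).Reachable u (someEnd ends e) := by
  obtain ⟨B, hBF, hB, hBrk⟩ := (forestMatroid ends).exists_basis F
  refine ⟨B, hBF, hB, hBrk, fun e he u hu => ?_⟩
  by_cases heB : e ∈ B
  · exact reachable_of_mem heB hu (someEnd_mem e)
  · exact hB.reachable_of_not_sparse_insert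
      ((forestMatroid ends).not_indep_insert_of_card_eq_rk hBF hBrk he heB) hu (someEnd_mem e)

/-- A component with `m` vertices and `a` edges contributes at most `l (m - 1) + (k - l) m`
edges, and only `k (m - 1)` if it is a tree (`t = 0`). -/
lemma le_mul_pred_add_mul {k l a m t : ℕ} (hl : l ≤ k) (hm : 0 < m) (h : a + l ≤ k * m)
    (ht : t = 1 ∨ t = 0 ∧ a < m) : a ≤ l * (m - 1) + (k - l) * (m - 1 + t) := by
  obtain ⟨m, rfl⟩ := Nat.exists_eq_add_of_lt hm
  obtain ⟨d, rfl⟩ := Nat.exists_eq_add_of_le hl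
  simp only [zero_add, Nat.add_sub_cancel, Nat.add_sub_cancel_left]
  rcases ht with rfl | ⟨rfl, ha⟩
  · nlinarith
  · rcases Nat.eq_zero_or_pos (l + d) with hk | hk <;> nlinarith

/-- A maximal forest `B` of `F` has `n - c(F)` edges, and adding to it one edge of `F \ B` in
each component of `F` that is not a tree gives a pseudoforest. -/
theorem card_le_rk_forest_add_rk_pseudoforest {k l : ℕ} (hl : l ≤ k) {F : Finset E}
    (hF : Sparse ends F k l) :
    #F ≤ l * (forestMatroid ends).rk F + (k - l) * (pseudoforestMatroid ends).rk F := by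
  set G := underGraph ends F
  let comp (c : G.ConnectedComponent) : Finset V := {v | G.connectedComponentMk v = c}
  let g (e : E) : G.ConnectedComponent := G.connectedComponentMk (someEnd ends e)
  have hcomp : ∀ c, (comp c).Nonempty := fun c => by
    obtain ⟨v, rfl⟩ := G.connectedComponentMk_surjective c
    exact ⟨v, by simp [comp]⟩
  obtain ⟨B, hBF, hB, hBrk, hBreach⟩ := exists_maximal_forest (ends := ends) F
  obtain ⟨X, hXFB, hXinj, hXimg⟩ := (F \ B).exists_subset_injOn_image_eq g
  have hBX : #B + #X ≤ (pseudoforestMatroid ends).rk F := by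
    rw [← card_union_of_disjoint (disjoint_of_subset_right hXFB disjoint_sdiff)]
    exact FinMatroid.Indep.card_le_rk (M := pseudoforestMatroid ends)
      (hB.union_sparse_one_zero hBF hXinj) (union_subset hBF (hXFB.trans sdiff_subset))
  have hC : #((F \ B).image g) = #X := by rw [← hXimg, card_image_of_injOn hXinj]
  have hforest : ∑ c, (#(comp c) - 1) ≤ #B := by
    have hV : Fintype.card V = ∑ c, #(comp c) :=
      card_eq_sum_card_fiberwise (s := univ) fun v _ => mem_univ (G.connectedComponentMk v)
    have : ∑ c, (#(comp c) - 1) + Fintype.card G.ConnectedComponent = ∑ c, #(comp c) := by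
      rw [← card_univ, card_eq_sum_ones, ← sum_add_distrib]
      exact sum_congr rfl fun c _ => Nat.sub_add_cancel (hcomp c).card_pos
    have := card_le_card_add_card_connectedComponent (ends := ends) B
    have : Fintype.card (underGraph ends B).ConnectedComponent ≤
        Fintype.card G.ConnectedComponent := card_connectedComponent_le_of_forall_reachable hBreach
    omega
  have hcomponent : ∀ c, #(spanned ends F (comp c)) ≤ l * (#(comp c) - 1) +
      (k - l) * (#(comp c) - 1 + if c ∈ (F \ B).image g then 1 else 0) := by
    intro c
    refine le_mul_pred_add_mul hl (hcomp c).card_pos (hF _ (hcomp c)) ?_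
    by_cases hc : c ∈ (F \ B).image g
    · exact Or.inl (if_pos hc)
    refine Or.inr ⟨if_neg hc, ?_⟩
    have hsub : spanned ends F (comp c) ⊆ spanned ends B (comp c) := fun e he => by
      rw [spanned_connectedComponent, mem_filter] at he
      refine mem_spanned.2 ⟨?_, fun v hv => ?_⟩
      · by_contra heB
        exact hc (mem_image.2 ⟨e, mem_sdiff.2 ⟨he.1, heB⟩, he.2⟩)
      · simpa [comp] using (connectedComponentMk_eq_of_mem he.1 hv).trans he.2
    have := card_le_card hsub
    have := hB _ (hcomp c)
    omega
  calc #F = ∑ c, #(spanned ends F (comp c)) := by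
        rw [card_eq_sum_card_fiberwise (f := g) (t := univ) fun e _ => mem_univ _]
        exact sum_congr rfl fun c _ => (congrArg card (spanned_connectedComponent F c)).symm
    _ ≤ ∑ c, (l * (#(comp c) - 1) +
          (k - l) * (#(comp c) - 1 + if c ∈ (F \ B).image g then 1 else 0)) :=
        sum_le_sum fun c _ => hcomponent c
    _ = l * ∑ c, (#(comp c) - 1) + (k - l) * (∑ c, (#(comp c) - 1) + #((F \ B).image g)) := by
        have : ∑ c, (if c ∈ (F \ B).image g then 1 else 0) = #((F \ B).image g) := by
          simp only [sum_boole, Nat.cast_id, filter_mem_eq_inter, univ_inter]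
        rw [sum_add_distrib, ← mul_sum, ← mul_sum, sum_add_distrib, this]
    _ ≤ l * (forestMatroid ends).rk F + (k - l) * (pseudoforestMatroid ends).rk F := by
        rw [hC, ← hBrk]
        gcongr
        omega

/-! ### Spanning trees and maps -/

lemma Sparse.connected_of_card [Nonempty V] {F : Finset E} (hF : Sparse ends F 1 1)
    (hcard : #F + 1 = Fintype.card V) : (underGraph ends F).Connected :=
  (SimpleGraph.connected_iff _).2 ⟨fun u w => hF.reachable_of_card_le (fun _ _ u _ => mem_univ u)
    (by rw [card_univ]; omega) (mem_univ u) (mem_univ w), inferInstance⟩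

/-- Every vertex reaches `S` in `P` minus the edges spanned by `S`, as this property is
constant along the edges of `P`; so `P \ spanned P S` has at most `|S|` components. -/
lemma sparse_of_connected {P : Finset E} (hP : (underGraph ends P).Connected)
    (hcard : #P + 1 = Fintype.card V) : Sparse ends P 1 1 := by
  intro S ⟨s₀, hs₀⟩
  set P' := P \ spanned ends P S
  let reachS (x : V) : Prop := ∃ s ∈ S, (underGraph ends P').Reachable x s
  have hreachS : ∀ ⦃x y⦄, (underGraph ends P).Adj x y → reachS x = reachS y := by
    intro x y hxy
    obtain ⟨hne, e, he, hexy⟩ := underGraph_adj.1 hxy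
    by_cases heS : e ∈ spanned ends P S
    · have hS := (mem_spanned.1 heS).2
      exact propext ⟨fun _ => ⟨y, hS y (hexy ▸ Sym2.mem_mk_right x y), .rfl⟩,
        fun _ => ⟨x, hS x (hexy ▸ Sym2.mem_mk_left x y), .rfl⟩⟩
    · have hadj : (underGraph ends P').Adj x y :=
        underGraph_adj.2 ⟨hne, e, mem_sdiff.2 ⟨he, heS⟩, hexy⟩
      exact propext ⟨fun ⟨s, hs, h⟩ => ⟨s, hs, hadj.reachable.symm.trans h⟩,
        fun ⟨s, hs, h⟩ => ⟨s, hs, hadj.reachable.trans h⟩⟩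
  have hsurj : (univ : Finset (underGraph ends P').ConnectedComponent) ⊆
      S.image (underGraph ends P').connectedComponentMk := fun c _ => by
    obtain ⟨v, rfl⟩ := SimpleGraph.connectedComponentMk_surjective _ c
    obtain ⟨s, hs, hvs⟩ : reachS v :=
      ((hP.preconnected v s₀).apply_eq_of_adj hreachS).mpr ⟨s₀, hs₀, .rfl⟩
    exact mem_image.2 ⟨s, hs, (SimpleGraph.ConnectedComponent.sound hvs).symm⟩
  have := (card_le_card hsurj).trans card_image_le
  have := card_le_card_add_card_connectedComponent (ends := ends) P'
  rw [card_sdiff_of_subset (spanned_subset ends P S)] at this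
  have := card_le_card (spanned_subset ends P S)
  rw [card_univ] at *
  omega

/-- Hall's theorem, applied to the edges of `P` and their sets of endpoints. -/
lemma Sparse.isMapOn {P : Finset E} (hP : Sparse ends P 1 0) (hcard : #P = Fintype.card V) :
    IsMapOn ends P := by
  let t (e : P) : Finset V := {v | v ∈ ends e}
  have hall : ∀ s : Finset P, #s ≤ #(s.biUnion t) := fun s => by
    have hsub : s.map (Function.Embedding.subtype _) ⊆ spanned ends P (s.biUnion t) :=
      fun e he => by
        obtain ⟨e, hes, rfl⟩ := mem_map.1 he
        exact mem_spanned.2 ⟨e.2, fun v hv => mem_biUnion.2 ⟨e, hes, by simpa [t] using hv⟩⟩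
    simpa using (card_le_card hsub).trans (hP.card_spanned_le _)
  obtain ⟨f, hfinj, hft⟩ := (all_card_le_biUnion_card_iff_exists_injective t).1 hall
  let tail (e : E) : V := if he : e ∈ P then f ⟨e, he⟩ else someEnd ends e
  refine ⟨tail, fun e he => by simpa [tail, he, t] using hft ⟨e, he⟩, ?_⟩
  have hle : ∀ v, #{e ∈ P | tail e = v} ≤ 1 := fun v => card_le_one.2 fun a ha b hb => by
    simp only [mem_filter, tail] at ha hb
    rw [dif_pos ha.1] at ha
    rw [dif_pos hb.1] at hb
    exact congrArg Subtype.val (hfinj (ha.2.trans hb.2.symm))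
  have hsum : ∑ v, #{e ∈ P | tail e = v} = ∑ _v : V, 1 := by
    rw [← card_eq_sum_card_fiberwise fun e _ => mem_univ (tail e), hcard]
    simp
  exact fun v => (sum_eq_sum_iff_of_le fun v _ => hle v).1 hsum v (mem_univ v)

lemma sum_ite_val_lt {k l : ℕ} (hl : l ≤ k) (a b : ℕ) :
    ∑ i : Fin k, (if (i : ℕ) < l then a else b) = l * a + (k - l) * b := by
  have := card_filter_add_card_filter_not (s := (univ : Finset (Fin k))) fun i => (i : ℕ) < l
  rw [card_univ, Fintype.card_fin, Fin.card_filter_val_lt, min_eq_right hl] at this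
  rw [sum_ite, sum_const, sum_const, smul_eq_mul, smul_eq_mul, Fin.card_filter_val_lt,
    min_eq_right hl, show #{i : Fin k | ¬ (i : ℕ) < l} = k - l by omega]

variable [Fintype E]

theorem sparse_of_tree_map_decomposition {k l : ℕ} (hl : l ≤ k) (col : E → Fin k)
    (htree : ∀ i : Fin k, (i : ℕ) < l → IsSpanningTree ends {e | col e = i})
    (hmap : ∀ i : Fin k, l ≤ (i : ℕ) → IsMapOn ends {e | col e = i}) :
    Sparse ends univ k l := by
  have := Sparse.of_fibers (ends := ends) (F := univ) col
    (fun i => if (i : ℕ) < l then 1 else 0) fun i => by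
      split_ifs with hi
      · exact sparse_of_connected (htree i hi).1 (htree i hi).2
      · exact (hmap i (not_lt.1 hi)).sparse
  simpa [sum_ite_val_lt hl] using this

theorem Sparse.exists_forest_pseudoforest_partition {k l : ℕ} (hl : l ≤ k)
    (hsp : Sparse ends univ k l) :
    ∃ col : E → Fin k, ∀ i : Fin k,
      Sparse ends {e | col e = i} 1 (if (i : ℕ) < l then 1 else 0) := by
  let Ms (i : Fin k) : FinMatroid E :=
    if (i : ℕ) < l then forestMatroid ends else pseudoforestMatroid ends
  have hcond : ∀ F ⊆ univ, #F ≤ ∑ i, (Ms i).rk F := fun F _ => by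
    have : ∑ i, (Ms i).rk F = ∑ i : Fin k, if (i : ℕ) < l then (forestMatroid ends).rk F
        else (pseudoforestMatroid ends).rk F :=
      sum_congr rfl fun i _ => apply_ite (FinMatroid.rk · F) _ _ _
    rw [this, sum_ite_val_lt hl]
    exact card_le_rk_forest_add_rk_pseudoforest hl (hsp.mono (subset_univ F))
  rcases isEmpty_or_nonempty (Fin k) with hk | hk
  · have : IsEmpty E := Fintype.card_eq_zero_iff.1 (by simpa using hcond univ subset_rfl)
    exact ⟨isEmptyElim, isEmptyElim⟩
  obtain ⟨col, hcol⟩ := FinMatroid.exists_indep_partition Ms univ hcond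
  refine ⟨col, fun i => ?_⟩
  have := hcol i
  unfold Ms at this
  split_ifs at this ⊢ <;> exact this

/-- Since `|E| = kn - ℓ`, the bounds `n - 1` and `n` on the sizes of the forests and the
pseudoforests are attained. -/
theorem Sparse.exists_tree_map_decomposition {k l : ℕ} (hl : l ≤ k)
    (hcard : Fintype.card E + l = k * Fintype.card V) (hsp : Sparse ends univ k l) :
    ∃ col : E → Fin k, (∀ i : Fin k, (i : ℕ) < l → IsSpanningTree ends {e | col e = i}) ∧
      (∀ i : Fin k, l ≤ (i : ℕ) → IsMapOn ends {e | col e = i}) := by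
  obtain ⟨col, hcol⟩ := hsp.exists_forest_pseudoforest_partition hl
  rcases isEmpty_or_nonempty V with hV | hV
  · simp only [Fintype.card_of_isEmpty, mul_zero, Nat.add_eq_zero_iff] at hcard
    have : IsEmpty E := Fintype.card_eq_zero_iff.1 hcard.1
    exact ⟨col, fun i hi => by omega, fun _ _ => ⟨isEmptyElim, isEmptyElim, isEmptyElim⟩⟩
  let m (i : Fin k) : ℕ := if (i : ℕ) < l then 1 else 0
  have hle : ∀ i ∈ univ, #{e | col e = i} + m i ≤ Fintype.card V := fun i _ => by
    simpa using (hcol i).card_add_le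
  have hsum : ∑ i, (#{e | col e = i} + m i) = ∑ _i : Fin k, Fintype.card V := by
    rw [sum_add_distrib, ← card_eq_sum_card_fiberwise fun e _ => mem_univ (col e), card_univ,
      sum_ite_val_lt hl, sum_const, card_univ, Fintype.card_fin]
    simp [hcard]
  have htight := (sum_eq_sum_iff_of_le hle).1 hsum
  refine ⟨col, fun i hi => ?_, fun i hi => ?_⟩
  · have hc := htight i (mem_univ i)
    have hsp := hcol i
    simp only [m, if_pos hi] at hc hsp
    exact ⟨hsp.connected_of_card hc, hc⟩
  · have hc := htight i (mem_univ i)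
    have hsp := hcol i
    simp only [m, if_neg (not_lt.2 hi), add_zero] at hc hsp
    exact hsp.isMapOn hc

end

end Multigraph

/-- For `0 ≤ l ≤ k` and `G` with `kn - l` edges: `G` is `(k,l)`-sparse iff `G`
decomposes into `l` edge-disjoint spanning trees and `k - l` edge-disjoint maps. -/
theorem stmt8 [Fintype V] [Fintype E] (k l : ℕ) (hl : l ≤ k) (ends : E → Sym2 V)
    (hcard : Fintype.card E + l = k * Fintype.card V) :
    Sparse ends Finset.univ k l ↔
      ∃ col : E → Fin k,
        (∀ i : Fin k, (i : ℕ) < l →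
          IsSpanningTree ends (Finset.univ.filter (fun e => col e = i))) ∧
        (∀ i : Fin k, l ≤ (i : ℕ) →
          IsMapOn ends (Finset.univ.filter (fun e => col e = i))) :=
  ⟨fun hsp => hsp.exists_tree_map_decomposition hl hcard,
    fun ⟨col, htree, hmap⟩ => sparse_of_tree_map_decomposition hl col htree hmap⟩
end
end

section
/- Let 0 ≤ ℓ ≤ 2k-1 and suppose G is a (k,ℓ)-sparse multigraph on n vertices with fewer than kn - ℓ edges. Then there exist two vertices u, v (not necessarily distinct when ℓ ≤ k-1) such that adding the edge uv to G preserves (k,ℓ)-sparsity. -/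
open scoped Classical

noncomputable section

/- We model a finite multigraph as a vertex type `V`, an edge (index) type `E`,
and an endpoint map `ends : E → Sym2 V`; loops are edges whose endpoints form a
diagonal unordered pair.  A (sub)graph is given by a `Finset` of edge indices. -/

variable {V E : Type*}

/-! Call a nonempty vertex set `S` tight if it spans exactly `k|S| - l` edges. Since the number
of spanned edges is supermodular, the union of two intersecting tight sets is again tight.
The whole vertex set is not tight because there are fewer than `kn - l` edges, so a tight set
`T` of maximum size is proper. For `u ∈ T` and `v ∉ T`, a tight set containing both would give
the larger tight set `S ∪ T`; hence no tight set contains `u` and `v`, and adding the edge `uv`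
keeps every count within its bound. If there is no tight set at all, any loop can be added. -/

section Tight

variable (ends : E → Sym2 V) (F : Finset E)

theorem spanned_inter_spanned (X Y : Finset V) :
    spanned ends F X ∩ spanned ends F Y = spanned ends F (X ∩ Y) := by
  ext e
  simp only [spanned, Finset.mem_inter, Finset.mem_filter]
  grind

theorem spanned_union_subset_spanned (X Y : Finset V) :
    spanned ends F X ∪ spanned ends F Y ⊆ spanned ends F (X ∪ Y) := by
  intro e
  simp only [spanned, Finset.mem_union, Finset.mem_filter]
  grind

theorem card_spanned_add_card_spanned_le (X Y : Finset V) :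
    (spanned ends F X).card + (spanned ends F Y).card ≤
      (spanned ends F (X ∪ Y)).card + (spanned ends F (X ∩ Y)).card := by
  rw [← Finset.card_union_add_card_inter, spanned_inter_spanned]
  grw [spanned_union_subset_spanned]

def IsTight (k l : ℕ) (S : Finset V) : Prop :=
  S.Nonempty ∧ (spanned ends F S).card + l = k * S.card

variable {ends F} {k l : ℕ}

theorem Sparse.isTight_union (hs : Sparse ends F k l) {X Y : Finset V}
    (hX : IsTight ends F k l X) (hY : IsTight ends F k l Y) (hXY : (X ∩ Y).Nonempty) :
    IsTight ends F k l (X ∪ Y) := by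
  have hXuY : (X ∪ Y).Nonempty := hX.1.mono Finset.subset_union_left
  refine ⟨hXuY, le_antisymm (hs _ hXuY) ?_⟩
  have hsup := card_spanned_add_card_spanned_le ends F X Y
  have hcap := hs _ hXY
  have hcard : k * X.card + k * Y.card = k * (X ∪ Y).card + k * (X ∩ Y).card := by
    rw [← mul_add, ← mul_add, Finset.card_union_add_card_inter]
  linarith [hX.2, hY.2]

theorem Sparse.exists_forall_isTight_mem_not_mem [Fintype V] [Nonempty V]
    (hs : Sparse ends F k l) (huniv : ¬ IsTight ends F k l Finset.univ) :
    ∃ u v : V, ∀ S, IsTight ends F k l S → u ∈ S → v ∉ S := by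
  by_cases hex : ∃ S, IsTight ends F k l S
  · obtain ⟨T, hT, hTmax⟩ := Finset.exists_max_image
      (Finset.univ.filter (IsTight ends F k l)) Finset.card
      (by simpa [Finset.filter_nonempty_iff] using hex)
    rw [Finset.mem_filter] at hT
    obtain ⟨u, hu⟩ := hT.2.1
    obtain ⟨v, hv⟩ : ∃ v, v ∉ T := by
      by_contra! h
      exact huniv (Finset.eq_univ_iff_forall.mpr h ▸ hT.2)
    refine ⟨u, v, fun S hS huS hvS => hv ?_⟩
    have hST := hs.isTight_union hS hT.2 ⟨u, Finset.mem_inter.mpr ⟨huS, hu⟩⟩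
    have hle := hTmax _ (Finset.mem_filter.mpr ⟨Finset.mem_univ _, hST⟩)
    rw [Finset.eq_of_subset_of_card_le Finset.subset_union_right hle]
    exact Finset.mem_union_left T hvS
  · push Not at hex
    obtain ⟨v⟩ := ‹Nonempty V›
    exact ⟨v, v, fun S hS => (hex S hS).elim⟩

end Tight

theorem not_isTight_univ [Fintype V] [Fintype E] {ends : E → Sym2 V} {k l : ℕ}
    (hcard : Fintype.card E + l < k * Fintype.card V) :
    ¬ IsTight ends Finset.univ k l Finset.univ := by
  rintro ⟨-, h⟩
  have : spanned ends Finset.univ (Finset.univ : Finset V) = Finset.univ := by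
    ext e
    simp [spanned]
  rw [this, Finset.card_univ, Finset.card_univ] at h
  omega

theorem card_spanned_sum_elim [Fintype E] (ends : E → Sym2 V) (u v : V) (S : Finset V) :
    (spanned (Sum.elim ends fun _ : Unit => s(u, v)) Finset.univ S).card =
      (spanned ends Finset.univ S).card + if u ∈ S ∧ v ∈ S then 1 else 0 := by
  simp only [spanned, Finset.card_filter, Fintype.sum_sum_type, Sum.elim_inl, Sum.elim_inr,
    Finset.univ_unique, Finset.sum_singleton, Sym2.mem_iff, forall_eq_or_imp, forall_eq]
  -- the two sides differ only in their `Decidable` instances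
  congr

theorem Sparse.sum_elim_of_forall_isTight_mem_not_mem [Fintype E] {ends : E → Sym2 V}
    {k l : ℕ} {u v : V} (hs : Sparse ends Finset.univ k l)
    (huv : ∀ S, IsTight ends Finset.univ k l S → u ∈ S → v ∉ S) :
    Sparse (Sum.elim ends fun _ : Unit => s(u, v)) Finset.univ k l := by
  intro S hS
  rw [card_spanned_sum_elim]
  split_ifs with h
  · have hle := hs S hS
    have hne : (spanned ends Finset.univ S).card + l ≠ k * S.card :=
      fun heq => huv S ⟨hS, heq⟩ h.1 h.2
    omega
  · simpa using hs S hS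

theorem stmt10_general [Fintype V] [Fintype E] (k l : ℕ)
    (ends : E → Sym2 V) (hs : Sparse ends Finset.univ k l)
    (hcard : Fintype.card E + l < k * Fintype.card V) :
    ∃ u v : V,
      Sparse (Sum.elim ends (fun _ : Unit => s(u, v)))
        (Finset.univ : Finset (E ⊕ Unit)) k l := by
  have : Nonempty V := Fintype.card_pos_iff.mp (Nat.pos_of_mul_pos_left (a := k) (by omega))
  obtain ⟨u, v, huv⟩ := hs.exists_forall_isTight_mem_not_mem (not_isTight_univ hcard)
  exact ⟨u, v, hs.sum_elim_of_forall_isTight_mem_not_mem huv⟩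

/-- A `(k,l)`-sparse graph (`0 ≤ l ≤ 2k-1`) with fewer than `kn - l` edges admits
two (not necessarily distinct) vertices `u`, `v` such that adding the edge `uv`
preserves `(k,l)`-sparsity. -/
theorem stmt10 [Fintype V] [Fintype E] (k l : ℕ) (hl : l ≤ 2 * k - 1)
    (ends : E → Sym2 V) (hs : Sparse ends Finset.univ k l)
    (hcard : Fintype.card E + l < k * Fintype.card V) :
    ∃ u v : V,
      Sparse (Sum.elim ends (fun _ : Unit => s(u, v)))
        (Finset.univ : Finset (E ⊕ Unit)) k l :=
  stmt10_general k l ends hs hcard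
end
end

section
/- A finite multigraph G admits an orientation in which every vertex has out-degree exactly k if and only if G has exactly k|V| edges and every vertex subset V' spans at most k|V'| edges. -/
/-! An orientation with out-degree `k` everywhere is the same thing as a bijection from the
edges onto the slots `V × Fin k` sending each edge to a slot at one of its endpoints. Counting
fibres gives necessity. Conversely, a set `A` of edges can reach exactly `k` slots per endpoint
of `A`, and `A` is spanned by its endpoints, so sparsity is Hall's condition for an injective
assignment of slots; as `|E| = k|V|`, that injection is a bijection. -/

open scoped Classical

noncomputable section

/- We model a finite multigraph as a vertex type `V`, an edge (index) type `E`,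
and an endpoint map `ends : E → Sym2 V`; loops are edges whose endpoints form a
diagonal unordered pair.  A (sub)graph is given by a `Finset` of edge indices. -/

variable {V E : Type*}

open Finset

theorem card_eq_mul_card_of_card_fiber_eq [Fintype V] [Fintype E] {k : ℕ} {tail : E → V}
    (hdeg : ∀ v, #{e | tail e = v} = k) : Fintype.card E = k * Fintype.card V := by
  rw [← card_univ, card_eq_sum_card_fiberwise fun e _ => mem_univ (tail e)]
  simp [hdeg, mul_comm]

theorem card_spanned_le_of_card_fiber_le [Fintype E] {k : ℕ} {ends : E → Sym2 V}
    {tail : E → V} (hmem : ∀ e, tail e ∈ ends e) (hdeg : ∀ v, #{e | tail e = v} ≤ k)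
    (S : Finset V) :
    #(spanned ends univ S) ≤ k * #S :=
  card_le_mul_card_image_of_maps_to
    (fun e he => (by simpa [spanned] using he : ∀ v ∈ ends e, v ∈ S) _ (hmem e)) k
    fun v _ => (card_le_card (filter_subset_filter _ (subset_univ _))).trans (hdeg v)

theorem exists_injective_slot_of_card_spanned_le [Fintype V] [Fintype E] {F : Type*} [Fintype F]
    {ends : E → Sym2 V}
    (hsparse : ∀ S : Finset V, #(spanned ends univ S) ≤ Fintype.card F * #S) :
    ∃ f : E → V × F, Function.Injective f ∧ ∀ e, (f e).1 ∈ ends e := by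
  refine (Fintype.all_card_le_filter_rel_iff_exists_injective
    fun e (w : V × F) => w.1 ∈ ends e).mp fun A => ?_
  set S : Finset V := {v | ∃ e ∈ A, v ∈ ends e}
  have hA : A ⊆ spanned ends univ S := fun e he => by
    simpa [spanned, S] using fun v hv => ⟨e, he, hv⟩
  have hslots : ({w | ∃ e ∈ A, w.1 ∈ ends e} : Finset (V × F)) = S ×ˢ univ := by
    ext; simp [S]
  calc #A ≤ Fintype.card F * #S := (card_le_card hA).trans (hsparse S)
    _ = _ := by rw [hslots, card_product, card_univ, mul_comm]

theorem card_filter_fst_equiv_eq [Fintype E] {F : Type*} [Fintype F] (σ : E ≃ V × F) (v : V) :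
    #{e | (σ e).1 = v} = Fintype.card F := by
  rw [card_equiv σ (t := {v} ×ˢ univ) (by simp [Prod.ext_iff, eq_comm]), card_product,
    card_singleton, one_mul, card_univ]

/-- `G` admits an orientation with out-degree exactly `k` at every vertex iff
`G` has exactly `k|V|` edges and every vertex subset `S` spans at most `k|S|` edges. -/
theorem stmt13 [Fintype V] [Fintype E] (k : ℕ) (ends : E → Sym2 V) :
    (∃ tail : E → V, (∀ e, tail e ∈ ends e) ∧
        ∀ v : V, (Finset.univ.filter (fun e => tail e = v)).card = k) ↔
      (Fintype.card E = k * Fintype.card V ∧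
        ∀ S : Finset V, (spanned ends Finset.univ S).card ≤ k * S.card) := by
  constructor
  · rintro ⟨tail, hmem, hdeg⟩
    exact ⟨card_eq_mul_card_of_card_fiber_eq hdeg,
      card_spanned_le_of_card_fiber_le hmem fun v => (hdeg v).le⟩
  · rintro ⟨hcard, hsparse⟩
    obtain ⟨f, hinj, hf⟩ := exists_injective_slot_of_card_spanned_le (F := Fin k)
      (by simpa using hsparse)
    have hbij : Function.Bijective f :=
      (Fintype.bijective_iff_injective_and_card f).mpr ⟨hinj, by simp [hcard, mul_comm]⟩
    exact ⟨fun e => (Equiv.ofBijective f hbij e).1, hf,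
      by simpa using card_filter_fst_equiv_eq (Equiv.ofBijective f hbij)⟩
end
end
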